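/- Let M = (E, rk, m) be a quasi-arithmetic matroid and let m̄ be the multiplicity function of its reduction. Then m̄ satisfies axiom (A1): for every X ⊆ E and e ∈ E, if rk(X∪{e}) = rk(X) then m̄(X∪{e}) divides m̄(X), and otherwise m̄(X) divides m̄(X∪{e}). -/
import Mathlib


open scoped Classical

section Arithmat

variable {E : Type*} [Fintype E] [DecidableEq E]

/-- The rank function axioms of a matroid on ground set `E`. -/
def IsRankFn (rk : Finset E → ℕ) : Prop :=
  (∀ X : Finset E, rk X ≤ X.card) ∧
  (∀ X Y : Finset E, rk (X ∪ Y) + rk (X ∩ Y) ≤ rk X + rk Y) ∧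
  (∀ (X : Finset E) (e : E), rk X ≤ rk (insert e X) ∧ rk (insert e X) ≤ rk X + 1)

/-- `B` is a basis of the matroid: `|B| = rk B = rk E`. -/
def IsBasis (rk : Finset E → ℕ) (B : Finset E) : Prop :=
  B.card = rk B ∧ rk B = rk (Finset.univ : Finset E)

/-- `(X, X ⊔ T ⊔ F)` is a molecule: `X`, `T`, `F` are pairwise disjoint and
`rk Z = rk X + |Z ∩ F|` for every `Z` with `X ⊆ Z ⊆ X ∪ T ∪ F`. -/
def IsMolecule (rk : Finset E → ℕ) (X T F : Finset E) : Prop :=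
  Disjoint X T ∧ Disjoint X F ∧ Disjoint T F ∧
  ∀ Z : Finset E, X ⊆ Z → Z ⊆ X ∪ T ∪ F → rk Z = rk X + (Z ∩ F).card

/-- Axiom (A1) of (quasi-)arithmetic matroids. -/
def AxiomA1 (rk m : Finset E → ℕ) : Prop :=
  ∀ (X : Finset E) (e : E),
    (rk (insert e X) = rk X → m (insert e X) ∣ m X) ∧
    (rk (insert e X) ≠ rk X → m X ∣ m (insert e X))

/-- Axiom (A2) of (quasi-)arithmetic matroids. -/
def AxiomA2 (rk m : Finset E → ℕ) : Prop :=
  ∀ X T F : Finset E, IsMolecule rk X T F →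
    m X * m (X ∪ T ∪ F) = m (X ∪ T) * m (X ∪ F)

/-- Axiom (P) of arithmetic matroids.  The sign `(-1) ^ (|X ∪ F| - |S|)` is
expressed as `(-1) ^ (|X ∪ F| + |S|)`, which has the same parity. -/
def AxiomP (rk m : Finset E → ℕ) : Prop :=
  ∀ X T F : Finset E, IsMolecule rk X T F →
    0 ≤ ∑ S ∈ Finset.Icc X (X ∪ T ∪ F), (-1 : ℤ) ^ ((X ∪ F).card + S.card) * (m S : ℤ)

/-- A quasi-arithmetic matroid: a matroid rank function together with a positive
multiplicity function satisfying (A1) and (A2). -/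
def IsQuasiArithmeticMatroid (rk m : Finset E → ℕ) : Prop :=
  IsRankFn rk ∧ (∀ X : Finset E, 0 < m X) ∧ AxiomA1 rk m ∧ AxiomA2 rk m

/-- An arithmetic matroid: a matroid rank function together with a positive
multiplicity function satisfying (A1), (A2) and (P). -/
def IsArithmeticMatroid (rk m : Finset E → ℕ) : Prop :=
  IsRankFn rk ∧ (∀ X : Finset E, 0 < m X) ∧ AxiomA1 rk m ∧ AxiomA2 rk m ∧ AxiomP rk m

/-- The gcd property: `m X = gcd { m I : I ⊆ X, |I| = rk I = rk X }`. -/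
def GcdProperty (rk m : Finset E → ℕ) : Prop :=
  ∀ X : Finset E,
    m X = (X.powerset.filter (fun I => I.card = rk I ∧ rk I = rk X)).gcd m

/-- The strong gcd property: `m X = gcd { m B : B basis, |B ∩ X| = rk X }`. -/
def StrongGcdProperty (rk m : Finset E → ℕ) : Prop :=
  ∀ X : Finset E,
    m X = ((Finset.univ : Finset (Finset E)).filter
      (fun B => IsBasis rk B ∧ (B ∩ X).card = rk X)).gcd m

/-- The rank function of the dual matroid: `rk* X = |X| - rk E + rk (E \ X)`. -/
def dualRk (rk : Finset E → ℕ) : Finset E → ℕ :=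
  fun X => X.card + rk Xᶜ - rk (Finset.univ : Finset E)

/-- The multiplicity function of the dual arithmetic matroid: `m* X = m (E \ X)`. -/
def dualM (m : Finset E → ℕ) : Finset E → ℕ := fun X => m Xᶜ

/-- The set of bases of the matroid, as a `Finset`. -/
noncomputable def basesFinset (rk : Finset E → ℕ) : Finset (Finset E) :=
  (Finset.univ : Finset (Finset E)).filter (IsBasis rk)

/-- The multiplicity function of the reduction:
`m̄ X = gcd { m B : B basis, rk X = |X ∩ B| } / gcd { m B : B basis }`. -/
noncomputable def reducedM (rk m : Finset E → ℕ) : Finset E → ℕ := fun X =>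
  ((basesFinset rk).filter (fun B => (X ∩ B).card = rk X)).gcd m /
    (basesFinset rk).gcd m

/-- `B_(X,Y)`: the set of pairs `(B₁, B₂)` of bases with `rk X = |X ∩ B₁|` and
`rk Y = |Y ∩ B₂|`. -/
def BasisPairs (rk : Finset E → ℕ) (X Y : Finset E) : Set (Finset E × Finset E) :=
  {p | IsBasis rk p.1 ∧ IsBasis rk p.2 ∧ rk X = (X ∩ p.1).card ∧ rk Y = (Y ∩ p.2).card}

end Arithmat

private lemma my_div_dvd_div {a b g : ℕ} (h : a ∣ b) (hg : g ∣ a) : a / g ∣ b / g := by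
  obtain ⟨a', rfl⟩ := hg
  obtain ⟨k, rfl⟩ := h
  rcases Nat.eq_zero_or_pos g with hg0 | hg0
  · simp [hg0]
  · rw [Nat.mul_div_cancel_left _ hg0, mul_assoc, Nat.mul_div_cancel_left _ hg0]
    exact Dvd.intro k rfl

section Helpers

variable {E : Type*} [Fintype E] [DecidableEq E] {rk : Finset E → ℕ}

private lemma rk_union_le (h : IsRankFn rk) (X T : Finset E) :
    rk (X ∪ T) ≤ rk X + T.card := by
  classical
  induction T using Finset.induction_on with
  | empty => simp
  | @insert a T ha ih =>
      calc rk (X ∪ insert a T) = rk (insert a (X ∪ T)) := by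
            rw [Finset.union_insert]
        _ ≤ rk (X ∪ T) + 1 := (h.2.2 _ _).2
        _ ≤ rk X + T.card + 1 := by omega
        _ = rk X + (insert a T).card := by rw [Finset.card_insert_of_notMem ha]; omega

private lemma rk_mono (h : IsRankFn rk) {X Y : Finset E} (hXY : X ⊆ Y) :
    rk X ≤ rk Y := by
  classical
  have key : ∀ T X : Finset E, rk X ≤ rk (X ∪ T) := by
    intro T
    induction T using Finset.induction_on with
    | empty => simp
    | @insert a T ha ih =>
        intro X
        calc rk X ≤ rk (X ∪ T) := ih X
          _ ≤ rk (insert a (X ∪ T)) := (h.2.2 _ _).1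
          _ = rk (X ∪ insert a T) := by rw [Finset.union_insert]
  have := key Y X
  rwa [Finset.union_eq_right.mpr hXY] at this

private lemma rk_of_subset_basis (h : IsRankFn rk) {B S : Finset E}
    (hB : IsBasis rk B) (hS : S ⊆ B) : rk S = S.card := by
  have h1 : rk S ≤ S.card := h.1 S
  have h2 : rk B ≤ rk S + (B \ S).card := by
    have := rk_union_le h S (B \ S)
    rwa [Finset.union_sdiff_of_subset hS] at this
  have h3 : (B \ S).card = B.card - S.card := Finset.card_sdiff_of_subset hS
  have h4 : S.card ≤ B.card := Finset.card_le_card hS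
  have h5 : B.card = rk B := hB.1
  omega

end Helpers

/-- The multiplicity function of the reduction of a
quasi-arithmetic matroid satisfies axiom (A1). -/
theorem reducedM_axiomA1 {E : Type*} [Fintype E] [DecidableEq E]
    (rk m : Finset E → ℕ) (hM : IsQuasiArithmeticMatroid rk m) :
    AxiomA1 rk (reducedM rk m) := by
  obtain ⟨hrk, hpos, hA1, hA2⟩ := hM
  intro X e
  have hgdvd : ∀ S : Finset (Finset E), S ⊆ basesFinset rk →
      (basesFinset rk).gcd m ∣ S.gcd m := fun S hS =>
    Finset.dvd_gcd fun b hb => Finset.gcd_dvd (hS hb)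
  have key : ∀ A C : Finset E,
      (∀ B ∈ basesFinset rk, (C ∩ B).card = rk C → (A ∩ B).card = rk A) →
      reducedM rk m A ∣ reducedM rk m C := by
    intro A C hsub
    apply my_div_dvd_div
    · apply Finset.dvd_gcd
      intro b hb
      simp only [Finset.mem_filter] at hb
      exact Finset.gcd_dvd (Finset.mem_filter.mpr ⟨hb.1, hsub b hb.1 hb.2⟩)
    · exact hgdvd _ (Finset.filter_subset _ _)
  constructor
  · intro heq
    apply key
    intro B hB hXB
    have hbasis : IsBasis rk B := (Finset.mem_filter.mp hB).2
    have h1 : rk (insert e X ∩ B) = (insert e X ∩ B).card :=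
      rk_of_subset_basis hrk hbasis Finset.inter_subset_right
    have h2 : rk (insert e X ∩ B) ≤ rk (insert e X) :=
      rk_mono hrk Finset.inter_subset_left
    have h3 : (X ∩ B).card ≤ (insert e X ∩ B).card :=
      Finset.card_le_card (Finset.inter_subset_inter (Finset.subset_insert e X)
        (Finset.Subset.refl B))
    omega
  · intro hne
    apply key
    intro B hB hXB
    have hbasis : IsBasis rk B := (Finset.mem_filter.mp hB).2
    have hstep := hrk.2.2 X e
    have heq1 : rk (insert e X) = rk X + 1 := by omega
    have h1 : rk (X ∩ B) = (X ∩ B).card :=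
      rk_of_subset_basis hrk hbasis Finset.inter_subset_right
    have h2 : rk (X ∩ B) ≤ rk X := rk_mono hrk Finset.inter_subset_left
    have h4 : (insert e X ∩ B).card ≤ (X ∩ B).card + 1 := by
      have hsub : insert e X ∩ B ⊆ insert e (X ∩ B) := by
        intro x hx
        simp only [Finset.mem_inter, Finset.mem_insert] at hx ⊢
        tauto
      calc (insert e X ∩ B).card ≤ (insert e (X ∩ B)).card := Finset.card_le_card hsub
        _ ≤ (X ∩ B).card + 1 := Finset.card_insert_le _ _
    omega
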